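/- The sPCE bound lower-bounds the mutual information: L_T^sPCE(π, L) ≤ I(θ; h_T | π) for every L ≥ 1, where I(θ; h_T | π) is the mutual information between θ and the history h_T under the joint distribution p(θ)p(h_T | θ, π). -/
import Mathlib


open Finset
open scoped Classical

noncomputable section

namespace Stmt10

/-- The InfoNCE objective
`L_T^NCE(π, U; L) = E_{p(θ_{0:L}) p(h_T|θ₀,π)}
  [log( exp U(h_T,θ₀) / ((1/(L+1)) Σ_{i=0}^L exp U(h_T,θ_i)) )]`,
with `θ₀,...,θ_L` i.i.d. from the prior and `h_T ∼ p(·|θ₀,π)`. -/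
def nce {Θsp Hsp : Type*} [Fintype Θsp] [Fintype Hsp]
    (prior : Θsp → ℝ) (lik : Θsp → Hsp → ℝ) (U : Hsp → Θsp → ℝ) (L : ℕ) : ℝ :=
  ∑ θs : Fin (L+1) → Θsp, (∏ i, prior (θs i)) *
    ∑ h, lik (θs 0) h *
      Real.log (Real.exp (U h (θs 0)) /
        ((1/((L : ℝ)+1)) * ∑ i, Real.exp (U h (θs i))))

/-- The sequential Prior Contrastive Estimation (sPCE) bound
`L_T^sPCE(π, L) = E_{p(θ_{0:L}) p(h_T|θ₀,π)}
  [log( p(h_T|θ₀,π) / ((1/(L+1)) Σ_{ℓ=0}^L p(h_T|θ_ℓ,π)) )]`. -/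
def spce {Θsp Hsp : Type*} [Fintype Θsp] [Fintype Hsp]
    (prior : Θsp → ℝ) (lik : Θsp → Hsp → ℝ) (L : ℕ) : ℝ :=
  ∑ θs : Fin (L+1) → Θsp, (∏ i, prior (θs i)) *
    ∑ h, lik (θs 0) h *
      Real.log (lik (θs 0) h / ((1/((L : ℝ)+1)) * ∑ i, lik (θs i) h))

lemma marg {Θ : Type*} [Fintype Θ] (prior : Θ → ℝ) (hprs : ∑ θ, prior θ = 1)
    (L : ℕ) (g : Θ → ℝ) :
    ∑ θs : Fin (L+1) → Θ, (∏ i, prior (θs i)) * g (θs 0) = ∑ θ, prior θ * g θ := by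
  classical
  set f : Fin (L+1) → Θ → ℝ := fun i θ => if i = 0 then prior θ * g θ else prior θ with hf
  have h1 : ∀ θs : Fin (L+1) → Θ,
      (∏ i, prior (θs i)) * g (θs 0) = ∏ i, f i (θs i) := by
    intro θs
    rw [Fin.prod_univ_succ, Fin.prod_univ_succ]
    simp only [hf, if_pos rfl, Fin.succ_ne_zero, if_false, if_true]
    ring
  have h2 : ∑ θs : Fin (L+1) → Θ, ∏ i, f i (θs i) = ∏ i, ∑ θ, f i θ := by
    rw [Finset.prod_univ_sum]
    simp
  rw [Finset.sum_congr rfl (fun θs _ => h1 θs), h2, Fin.prod_univ_succ]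
  simp only [hf, if_pos rfl, Fin.succ_ne_zero, if_false, if_true, hprs]
  simp

lemma total_one {Θ : Type*} [Fintype Θ] (prior : Θ → ℝ) (hprs : ∑ θ, prior θ = 1)
    (L : ℕ) :
    ∑ θs : Fin (L+1) → Θ, (∏ i, prior (θs i)) = 1 := by
  have := marg prior hprs L (fun _ => 1)
  simpa [hprs] using this

lemma sym_swap {Θ Hsp : Type*} [Fintype Θ] [Fintype Hsp]
    (prior : Θ → ℝ) (lik : Θ → Hsp → ℝ) (L : ℕ) (h : Hsp) (i : Fin (L+1)) :
    ∑ θs : Fin (L+1) → Θ, (∏ j, prior (θs j)) * (lik (θs i) h / ∑ j, lik (θs j) h)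
      = ∑ θs : Fin (L+1) → Θ, (∏ j, prior (θs j)) * (lik (θs 0) h / ∑ j, lik (θs j) h) := by
  classical
  have hinv : Function.Involutive (fun θs : Fin (L+1) → Θ => θs ∘ (Equiv.swap 0 i)) := by
    intro θs; funext x; simp [Function.comp, Equiv.swap_apply_self]
  refine Fintype.sum_bijective _ hinv.bijective _ _ ?_
  intro θs
  simp only [Function.comp]
  rw [show ((Equiv.swap (0:Fin (L+1)) i) 0) = i from Equiv.swap_apply_left 0 i]
  rw [Equiv.prod_comp (Equiv.swap 0 i) (fun j => prior (θs j)),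
    Equiv.sum_comp (Equiv.swap 0 i) (fun j => lik (θs j) h)]

/-- The sPCE bound lower-bounds the mutual information:
`L_T^sPCE(π, L) ≤ I(θ; h_T | π)` for every `L ≥ 1`, where the mutual
information is between θ and the history under the joint `p(θ) p(h_T|θ,π)`. -/
theorem spce_le_mutual_information
    {Θsp Hsp : Type*} [Fintype Θsp] [Fintype Hsp]
    (prior : Θsp → ℝ) (lik : Θsp → Hsp → ℝ)
    (hpr : ∀ θ, 0 < prior θ) (hprs : ∑ θ, prior θ = 1)
    (hlik : ∀ θ h, 0 < lik θ h) (hliks : ∀ θ, ∑ h, lik θ h = 1)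
    (L : ℕ) (hL : 1 ≤ L) :
    spce prior lik L
      ≤ ∑ θ, ∑ h, prior θ * lik θ h *
          Real.log (lik θ h / (∑ θ', prior θ' * lik θ' h)) := by
  classical
  have hΘ : Nonempty Θsp := by
    by_contra hc
    rw [not_nonempty_iff] at hc
    rw [Finset.univ_eq_empty, Finset.sum_empty] at hprs
    norm_num at hprs
  set m : Hsp → ℝ := fun h => ∑ θ', prior θ' * lik θ' h with hm
  have hmpos : ∀ h, 0 < m h := fun h =>
    Finset.sum_pos (fun θ _ => mul_pos (hpr θ) (hlik θ h)) univ_nonempty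
  set S : (Fin (L+1) → Θsp) → Hsp → ℝ := fun θs h => ∑ i, lik (θs i) h with hS
  have hSpos : ∀ θs h, 0 < S θs h := fun θs h =>
    Finset.sum_pos (fun i _ => hlik _ h) univ_nonempty
  have hL1 : (0:ℝ) < (L:ℝ)+1 := by positivity
  have hApos : ∀ θs h, 0 < (1/((L:ℝ)+1)) * S θs h := fun θs h =>
    mul_pos (by positivity) (hSpos θs h)
  have hprodpos : ∀ θs : Fin (L+1) → Θsp, (0:ℝ) ≤ ∏ i, prior (θs i) := fun θs =>
    le_of_lt (Finset.prod_pos fun i _ => hpr _)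
  -- rewrite MI
  have hMI : (∑ θ, ∑ h, prior θ * lik θ h * Real.log (lik θ h / m h))
      = ∑ θs : Fin (L+1) → Θsp, (∏ i, prior (θs i)) *
          ∑ h, lik (θs 0) h * Real.log (lik (θs 0) h / m h) := by
    rw [marg prior hprs L (fun θ => ∑ h, lik θ h * Real.log (lik θ h / m h))]
    refine Finset.sum_congr rfl fun θ _ => ?_
    rw [Finset.mul_sum]
    exact Finset.sum_congr rfl fun h _ => by ring
  rw [← sub_nonneg, hMI]
  unfold spce
  rw [← Finset.sum_sub_distrib]
  have hsplit : ∀ θs : Fin (L+1) → Θsp,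
      (∏ i, prior (θs i)) * (∑ h, lik (θs 0) h * Real.log (lik (θs 0) h / m h))
        - (∏ i, prior (θs i)) * (∑ h, lik (θs 0) h *
            Real.log (lik (θs 0) h / ((1/((L:ℝ)+1)) * S θs h)))
      = (∏ i, prior (θs i)) * ∑ h, lik (θs 0) h *
          (Real.log ((1/((L:ℝ)+1)) * S θs h) - Real.log (m h)) := by
    intro θs
    rw [← mul_sub, ← Finset.sum_sub_distrib]
    congr 1
    refine Finset.sum_congr rfl fun h _ => ?_
    rw [← mul_sub]
    congr 1
    rw [Real.log_div (hlik _ h).ne' (hmpos h).ne',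
      Real.log_div (hlik _ h).ne' (hApos θs h).ne']
    ring
  rw [Finset.sum_congr rfl fun θs _ => hsplit θs]
  -- lower bound log difference by 1 - m/A
  have key : ∀ (θs : Fin (L+1) → Θsp) (h : Hsp),
      1 - m h / ((1/((L:ℝ)+1)) * S θs h)
        ≤ Real.log ((1/((L:ℝ)+1)) * S θs h) - Real.log (m h) := by
    intro θs h
    have h1 := Real.log_le_sub_one_of_pos (div_pos (hmpos h) (hApos θs h))
    rw [Real.log_div (hmpos h).ne' (hApos θs h).ne'] at h1
    linarith
  have hstep : ∑ θs : Fin (L+1) → Θsp, (∏ i, prior (θs i)) *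
      ∑ h, lik (θs 0) h * (1 - m h / ((1/((L:ℝ)+1)) * S θs h))
      ≤ ∑ θs : Fin (L+1) → Θsp, (∏ i, prior (θs i)) *
        ∑ h, lik (θs 0) h *
          (Real.log ((1/((L:ℝ)+1)) * S θs h) - Real.log (m h)) := by
    refine Finset.sum_le_sum fun θs _ => ?_
    refine mul_le_mul_of_nonneg_left ?_ (hprodpos θs)
    refine Finset.sum_le_sum fun h _ => ?_
    exact mul_le_mul_of_nonneg_left (key θs h) (hlik _ h).le
  refine le_trans ?_ hstep
  -- show the lower bound equals 0
  have hT : ∀ h : Hsp,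
      ((L:ℝ)+1) * ∑ θs : Fin (L+1) → Θsp, (∏ j, prior (θs j)) * (lik (θs 0) h / S θs h) = 1 := by
    intro h
    have hcard : ((L:ℝ)+1) * (∑ θs : Fin (L+1) → Θsp, (∏ j, prior (θs j)) * (lik (θs 0) h / S θs h))
        = ∑ i : Fin (L+1), ∑ θs : Fin (L+1) → Θsp,
            (∏ j, prior (θs j)) * (lik (θs i) h / S θs h) := by
      rw [Finset.sum_congr rfl fun i _ => sym_swap prior lik L h i]
      rw [Finset.sum_const, Finset.card_univ, Fintype.card_fin, nsmul_eq_mul]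
      push_cast
      ring
    rw [hcard, Finset.sum_comm]
    have : ∀ θs : Fin (L+1) → Θsp,
        ∑ i : Fin (L+1), (∏ j, prior (θs j)) * (lik (θs i) h / S θs h)
          = ∏ j, prior (θs j) := by
      intro θs
      rw [← Finset.mul_sum, ← Finset.sum_div, div_self (hSpos θs h).ne', mul_one]
    rw [Finset.sum_congr rfl fun θs _ => this θs]
    exact total_one prior hprs L
  have hmsum : ∑ h, m h = 1 := by
    rw [hm]
    rw [Finset.sum_comm]
    simp only [← Finset.mul_sum, hliks, mul_one]
    exact hprs
  have hK : ∑ θs : Fin (L+1) → Θsp, (∏ i, prior (θs i)) *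
      ∑ h, lik (θs 0) h * (m h / ((1/((L:ℝ)+1)) * S θs h)) = 1 := by
    have hterm : ∀ (θs : Fin (L+1) → Θsp) (h : Hsp),
        lik (θs 0) h * (m h / ((1/((L:ℝ)+1)) * S θs h))
          = (((L:ℝ)+1) * m h) * (lik (θs 0) h / S θs h) := by
      intro θs h
      field_simp
    calc ∑ θs : Fin (L+1) → Θsp, (∏ i, prior (θs i)) *
          ∑ h, lik (θs 0) h * (m h / ((1/((L:ℝ)+1)) * S θs h))
        = ∑ θs : Fin (L+1) → Θsp, ∑ h, (((L:ℝ)+1) * m h) *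
            ((∏ i, prior (θs i)) * (lik (θs 0) h / S θs h)) := by
          refine Finset.sum_congr rfl fun θs _ => ?_
          rw [Finset.mul_sum]
          refine Finset.sum_congr rfl fun h _ => ?_
          rw [hterm θs h]; ring
      _ = ∑ h, (((L:ℝ)+1) * m h) *
            ∑ θs : Fin (L+1) → Θsp, (∏ i, prior (θs i)) * (lik (θs 0) h / S θs h) := by
          rw [Finset.sum_comm]
          exact Finset.sum_congr rfl fun h _ => (Finset.mul_sum _ _ _).symm
      _ = ∑ h, m h := by
          refine Finset.sum_congr rfl fun h _ => ?_
          linear_combination (m h) * hT h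
      _ = 1 := hmsum
  have hE : ∑ θs : Fin (L+1) → Θsp, (∏ i, prior (θs i)) *
      ∑ h, lik (θs 0) h * (1 - m h / ((1/((L:ℝ)+1)) * S θs h)) = 0 := by
    have hexp : ∀ θs : Fin (L+1) → Θsp,
        (∏ i, prior (θs i)) * ∑ h, lik (θs 0) h * (1 - m h / ((1/((L:ℝ)+1)) * S θs h))
          = (∏ i, prior (θs i))
            - (∏ i, prior (θs i)) * ∑ h, lik (θs 0) h * (m h / ((1/((L:ℝ)+1)) * S θs h)) := by
      intro θs
      have : ∑ h, lik (θs 0) h * (1 - m h / ((1/((L:ℝ)+1)) * S θs h))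
          = 1 - ∑ h, lik (θs 0) h * (m h / ((1/((L:ℝ)+1)) * S θs h)) := by
        rw [Finset.sum_congr rfl fun h _ => mul_sub (lik (θs 0) h) 1 _,
          Finset.sum_sub_distrib]
        simp [hliks]
      rw [this]; ring
    rw [Finset.sum_congr rfl fun θs _ => hexp θs, Finset.sum_sub_distrib,
      total_one prior hprs L, hK]
    ring
  rw [hE]


end Stmt10
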